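/- arXiv:1412.1205 — 6 statements merged into one kernel-verified Lean document; each statement's English description precedes it below -/
import Mathlib

section
/- Top-s approximation stability: Let x, y ∈ ℝ^{2s} with y being s-sparse (at most s nonzero entries). Let x^s denote the vector x with all but its s largest-magnitude entries set to zero. Then ‖x^s − y‖₂ ≤ √3 · ‖x − y‖₂. -/
/-- Top-s approximation stability: for `x, y ∈ ℝ^{2s}` with `y` s-sparse, and `S`
the set of indices of the `s` largest-magnitude entries of `x` (so that `x^s` is the
restriction of `x` to `S`), we have `‖x^s − y‖₂ ≤ √3 ‖x − y‖₂`. -/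
theorem stmt_3 {s : ℕ} (x y : Fin (2 * s) → ℝ)
    (hy : (Finset.univ.filter (fun i => y i ≠ 0)).card ≤ s)
    (S : Finset (Fin (2 * s))) (hScard : S.card = s)
    (hStop : ∀ i ∈ S, ∀ j ∉ S, |x j| ≤ |x i|) :
    Real.sqrt (∑ i, ((if i ∈ S then x i else 0) - y i) ^ 2)
      ≤ Real.sqrt 3 * Real.sqrt (∑ i, (x i - y i) ^ 2) := by
  set T : Finset (Fin (2 * s)) := Finset.univ.filter (fun i => y i ≠ 0) with hT
  have hyT : ∀ i, i ∉ T → y i = 0 := by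
    intro i hi
    by_contra h
    exact hi (by simp [hT, h])
  -- key: ∑_{T\S} x² ≤ ∑_{S\T} x²
  have hcard : (T \ S).card ≤ (S \ T).card := by
    have h1 := Finset.card_sdiff_add_card_inter T S
    have h2 := Finset.card_sdiff_add_card_inter S T
    rw [Finset.inter_comm] at h2
    omega
  have key : ∑ i ∈ T \ S, (x i) ^ 2 ≤ ∑ i ∈ S \ T, (x i) ^ 2 := by
    rcases Finset.eq_empty_or_nonempty (T \ S) with h | h
    · rw [h]
      simp
      exact Finset.sum_nonneg (fun i _ => sq_nonneg _)
    · have hne : (S \ T).Nonempty := by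
        rw [← Finset.card_pos] at h ⊢; omega
      obtain ⟨j0, hj0, hj0min⟩ := Finset.exists_min_image (S \ T) (fun j => (x j) ^ 2) hne
      have hupper : ∀ i ∈ T \ S, (x i) ^ 2 ≤ (x j0) ^ 2 := by
        intro i hi
        have hiS : i ∉ S := (Finset.mem_sdiff.mp hi).2
        have := hStop j0 (Finset.mem_sdiff.mp hj0).1 i hiS
        nlinarith [abs_nonneg (x i), abs_nonneg (x j0), sq_abs (x i), sq_abs (x j0)]
      calc ∑ i ∈ T \ S, (x i) ^ 2 ≤ ∑ _i ∈ T \ S, (x j0) ^ 2 :=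
              Finset.sum_le_sum hupper
        _ = (T \ S).card * (x j0) ^ 2 := by simp [Finset.sum_const, nsmul_eq_mul]
        _ ≤ (S \ T).card * (x j0) ^ 2 := by
              apply mul_le_mul_of_nonneg_right _ (sq_nonneg _)
              exact_mod_cast hcard
        _ = ∑ _i ∈ S \ T, (x j0) ^ 2 := by simp [Finset.sum_const, nsmul_eq_mul]
        _ ≤ ∑ i ∈ S \ T, (x i) ^ 2 := Finset.sum_le_sum (fun i hi => hj0min i hi)
  -- sum inequality
  have main : ∑ i, ((if i ∈ S then x i else 0) - y i) ^ 2 ≤ 3 * ∑ i, (x i - y i) ^ 2 := by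
    have split : ∑ i, ((if i ∈ S then x i else 0) - y i) ^ 2
        = ∑ i ∈ S, (x i - y i) ^ 2 + ∑ i ∈ Finset.univ \ S, (y i) ^ 2 := by
      rw [← Finset.sum_sdiff (Finset.subset_univ S)]
      rw [add_comm]
      congr 1
      · exact Finset.sum_congr rfl (fun i hi => by simp [hi])
      · exact Finset.sum_congr rfl (fun i hi => by
          simp [(Finset.mem_sdiff.mp hi).2])
    have hsubset : T \ S ⊆ Finset.univ \ S := by
      intro i hi
      simp [Finset.mem_sdiff.mp hi |>.2]
    have sum_y : ∑ i ∈ Finset.univ \ S, (y i) ^ 2 = ∑ i ∈ T \ S, (y i) ^ 2 := by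
      refine (Finset.sum_subset hsubset ?_).symm
      intro i hi hni
      have : i ∉ T := fun hiT => hni (Finset.mem_sdiff.mpr ⟨hiT, (Finset.mem_sdiff.mp hi).2⟩)
      simp [hyT i this]
    have hy2 : ∀ i ∈ T \ S, (y i) ^ 2 ≤ 2 * (x i - y i) ^ 2 + 2 * (x i) ^ 2 := by
      intro i _
      nlinarith [sq_nonneg (x i + (x i - y i))]
    have sum_ST : ∑ i ∈ S \ T, (x i) ^ 2 ≤ ∑ i ∈ S, (x i - y i) ^ 2 := by
      calc ∑ i ∈ S \ T, (x i) ^ 2 = ∑ i ∈ S \ T, (x i - y i) ^ 2 :=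
            Finset.sum_congr rfl (fun i hi => by
              rw [hyT i (Finset.mem_sdiff.mp hi).2, sub_zero])
        _ ≤ ∑ i ∈ S, (x i - y i) ^ 2 :=
            Finset.sum_le_sum_of_subset_of_nonneg Finset.sdiff_subset
              (fun i _ _ => sq_nonneg _)
    have sum_TS : ∑ i ∈ T \ S, (x i - y i) ^ 2 ≤ ∑ i ∈ Finset.univ \ S, (x i - y i) ^ 2 :=
      Finset.sum_le_sum_of_subset_of_nonneg hsubset (fun i _ _ => sq_nonneg _)
    have hfull : ∑ i, (x i - y i) ^ 2
        = ∑ i ∈ S, (x i - y i) ^ 2 + ∑ i ∈ Finset.univ \ S, (x i - y i) ^ 2 := by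
      rw [← Finset.sum_sdiff (Finset.subset_univ S)]; ring
    have chain : ∑ i ∈ Finset.univ \ S, (y i) ^ 2
        ≤ 2 * ∑ i ∈ Finset.univ \ S, (x i - y i) ^ 2 + 2 * ∑ i ∈ S, (x i - y i) ^ 2 := by
      rw [sum_y]
      calc ∑ i ∈ T \ S, (y i) ^ 2
          ≤ ∑ i ∈ T \ S, (2 * (x i - y i) ^ 2 + 2 * (x i) ^ 2) := Finset.sum_le_sum hy2
        _ = 2 * ∑ i ∈ T \ S, (x i - y i) ^ 2 + 2 * ∑ i ∈ T \ S, (x i) ^ 2 := by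
            rw [Finset.sum_add_distrib, Finset.mul_sum, Finset.mul_sum]
        _ ≤ 2 * ∑ i ∈ Finset.univ \ S, (x i - y i) ^ 2 + 2 * ∑ i ∈ S, (x i - y i) ^ 2 := by
            have := key.trans sum_ST
            linarith
    rw [split, hfull]
    have hB : (0:ℝ) ≤ ∑ i ∈ Finset.univ \ S, (x i - y i) ^ 2 :=
      Finset.sum_nonneg (fun i _ => sq_nonneg _)
    linarith
  have h3 : (0:ℝ) ≤ ∑ i, (x i - y i) ^ 2 := Finset.sum_nonneg (fun i _ => sq_nonneg _)
  calc Real.sqrt (∑ i, ((if i ∈ S then x i else 0) - y i) ^ 2)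
      ≤ Real.sqrt (3 * ∑ i, (x i - y i) ^ 2) := Real.sqrt_le_sqrt main
    _ = Real.sqrt 3 * Real.sqrt (∑ i, (x i - y i) ^ 2) := Real.sqrt_mul (by norm_num) _
end

section
/- Optimality inequality for the ℓ1 proximal step (Lemma 1 of the paper): Let U ∈ ℝ^{n×d}, y ∈ ℝ^n, x_t ∈ ℝ^d, λ_t > 0, and let x_{t+1} = argmin_{x ∈ ℝ^d} (1/2)‖x − (x_t − Uᵀ(U x_t − y))‖₂² + λ_t‖x‖₁. Then for any s-sparse vector x ∈ ℝ^d, ‖x_{t+1} − x‖₂² ≤ λ_t √s ‖x_{t+1} − x‖₂ + |⟨x_{t+1} − x, Uᵀ(U x_t − y) − (x_t − x)⟩|. -/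
open Matrix

/-- Optimality inequality for the ℓ1 proximal step (Lemma 1): if `xt1` minimizes
`(1/2)‖x − (xt − Uᵀ(U xt − y))‖₂² + λ‖x‖₁`, then for any s-sparse `x`,
`‖xt1 − x‖₂² ≤ λ√s ‖xt1 − x‖₂ + |⟨xt1 − x, Uᵀ(U xt − y) − (xt − x)⟩|`. -/
theorem stmt_7 {n d s : ℕ} (U : Matrix (Fin n) (Fin d) ℝ) (y : Fin n → ℝ)
    (xt xt1 : Fin d → ℝ) (lam : ℝ) (hlam : 0 < lam)
    (hmin : ∀ z : Fin d → ℝ,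
      (1 / 2) * (∑ i, (xt1 i - (xt i - Uᵀ.mulVec (U.mulVec xt - y) i)) ^ 2)
          + lam * ∑ i, |xt1 i|
        ≤ (1 / 2) * (∑ i, (z i - (xt i - Uᵀ.mulVec (U.mulVec xt - y) i)) ^ 2)
          + lam * ∑ i, |z i|)
    (x : Fin d → ℝ) (hx : (Finset.univ.filter (fun i => x i ≠ 0)).card ≤ s) :
    (∑ i, (xt1 i - x i) ^ 2)
      ≤ lam * Real.sqrt s * Real.sqrt (∑ i, (xt1 i - x i) ^ 2)
        + |∑ i, (xt1 i - x i) * (Uᵀ.mulVec (U.mulVec xt - y) i - (xt i - x i))| := by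
  set v := Uᵀ.mulVec (U.mulVec xt - y) with hv
  set D := ∑ i, (xt1 i - x i) ^ 2 with hD
  set G := ∑ i, (xt1 i - x i) * (v i - (xt i - x i)) with hG
  set B := ∑ i, (xt1 i - (xt i - v i)) * (x i - xt1 i) with hB
  set L := ∑ i, |xt1 i| with hL
  set Lx := ∑ i, |x i| with hLx
  have hDnonneg : 0 ≤ D := Finset.sum_nonneg fun i _ => sq_nonneg _
  -- expansion of the quadratic
  have hq : ∀ t : ℝ, ∑ i, (xt1 i + t * (x i - xt1 i) - (xt i - v i)) ^ 2
      = (∑ i, (xt1 i - (xt i - v i)) ^ 2) + t * (2 * B) + t ^ 2 * D := by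
    intro t
    have hD2 : D = ∑ i, (x i - xt1 i) ^ 2 := by
      rw [hD]; exact Finset.sum_congr rfl fun i _ => by ring
    rw [hB, hD2]
    simp only [Finset.mul_sum, ← Finset.sum_add_distrib]
    exact Finset.sum_congr rfl fun i _ => by ring
  -- ℓ1 convexity bound
  have hl : ∀ t : ℝ, 0 ≤ t → t ≤ 1 →
      ∑ i, |xt1 i + t * (x i - xt1 i)| ≤ (1 - t) * L + t * Lx := by
    intro t ht0 ht1
    rw [hL, hLx, Finset.mul_sum, Finset.mul_sum, ← Finset.sum_add_distrib]
    apply Finset.sum_le_sum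
    intro i _
    have heq : xt1 i + t * (x i - xt1 i) = (1 - t) * xt1 i + t * x i := by ring
    rw [heq]
    calc |(1 - t) * xt1 i + t * x i| ≤ |(1 - t) * xt1 i| + |t * x i| := abs_add_le _ _
      _ = (1 - t) * |xt1 i| + t * |x i| := by
          rw [abs_mul, abs_mul, abs_of_nonneg (by linarith), abs_of_nonneg ht0]
  -- first-order inequality for each t
  have ht : ∀ t : ℝ, 0 < t → t ≤ 1 → 0 ≤ (B + lam * (Lx - L)) + t / 2 * D := by
    intro t ht0 ht1
    have h := hmin fun i => xt1 i + t * (x i - xt1 i)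
    rw [hq t] at h
    have h2 := hl t ht0.le ht1
    have h3 : 0 ≤ t * ((B + lam * (Lx - L)) + t / 2 * D) := by nlinarith
    nlinarith
  -- take t → 0
  have hA : 0 ≤ B + lam * (Lx - L) := by
    rcases eq_or_lt_of_le hDnonneg with h | h
    · have h1 := ht 1 one_pos le_rfl
      linarith [h.symm ▸ h1]
    · by_contra hneg
      push_neg at hneg
      set A := B + lam * (Lx - L) with hA'
      have hA0 : 0 < -A := by linarith
      have ht0 : 0 < min 1 (-A / D) := lt_min one_pos (by positivity)
      have ht1 : min 1 (-A / D) ≤ 1 := min_le_left _ _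
      have h2 := ht _ ht0 ht1
      have h3 : min 1 (-A / D) ≤ -A / D := min_le_right _ _
      have h4 : min 1 (-A / D) * D ≤ -A := by
        rw [← le_div_iff₀ h]; exact h3
      linarith
  -- rewrite B in terms of G and D
  have hBG : B = -G - D := by
    rw [hB, hG, hD, ← Finset.sum_neg_distrib, ← Finset.sum_sub_distrib]
    exact Finset.sum_congr rfl fun i _ => by ring
  -- sparsity bound on the ℓ1 difference
  set S := Finset.univ.filter (fun i => x i ≠ 0) with hS
  set T := ∑ i ∈ S, |xt1 i - x i| with hT
  have hTnonneg : 0 ≤ T := Finset.sum_nonneg fun i _ => abs_nonneg _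
  have hLxL : Lx - L ≤ T := by
    have h1 : Lx - L = ∑ i, (|x i| - |xt1 i|) := by
      rw [hLx, hL, Finset.sum_sub_distrib]
    have h2 : ∑ i, (|x i| - |xt1 i|) ≤ ∑ i, (if x i ≠ 0 then |xt1 i - x i| else 0) := by
      apply Finset.sum_le_sum
      intro i _
      by_cases hxi : x i = 0
      · simp [hxi, abs_nonneg]
      · simp only [hxi, ne_eq, not_false_eq_true, if_true]
        calc |x i| - |xt1 i| ≤ |x i - xt1 i| := abs_sub_abs_le_abs_sub _ _
          _ = |xt1 i - x i| := abs_sub_comm _ _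
    have h3 : T = ∑ i, (if x i ≠ 0 then |xt1 i - x i| else 0) := by
      rw [hT, hS, Finset.sum_filter]
    linarith
  -- Cauchy–Schwarz with sparsity
  have hCS : T ≤ Real.sqrt s * Real.sqrt D := by
    have h1 : T ^ 2 ≤ (S.card : ℝ) * ∑ i ∈ S, (xt1 i - x i) ^ 2 := by
      have h := Finset.sum_mul_sq_le_sq_mul_sq S (fun _ => (1 : ℝ)) (fun i => |xt1 i - x i|)
      simpa [hT, sq_abs] using h
    have h2 : ∑ i ∈ S, (xt1 i - x i) ^ 2 ≤ D := by
      rw [hD]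
      exact Finset.sum_le_sum_of_subset_of_nonneg (Finset.subset_univ S)
        (fun i _ _ => sq_nonneg _)
    have h3 : T ^ 2 ≤ (s : ℝ) * D := by
      have hc : (S.card : ℝ) ≤ (s : ℝ) := by exact_mod_cast hx
      calc T ^ 2 ≤ (S.card : ℝ) * ∑ i ∈ S, (xt1 i - x i) ^ 2 := h1
        _ ≤ (s : ℝ) * D := by
            apply mul_le_mul hc h2 (Finset.sum_nonneg fun i _ => sq_nonneg _)
              (Nat.cast_nonneg s)
    calc T = Real.sqrt (T ^ 2) := (Real.sqrt_sq hTnonneg).symm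
      _ ≤ Real.sqrt ((s : ℝ) * D) := Real.sqrt_le_sqrt h3
      _ = Real.sqrt s * Real.sqrt D := Real.sqrt_mul (Nat.cast_nonneg s) D
  -- combine
  have hGabs : -G ≤ |G| := abs_neg G ▸ le_abs_self (-G)
  have hlamT : lam * (Lx - L) ≤ lam * (Real.sqrt s * Real.sqrt D) :=
    mul_le_mul_of_nonneg_left (le_trans hLxL hCS) hlam.le
  calc D ≤ -G + lam * (Lx - L) := by linarith [hA, hBG]
    _ ≤ lam * Real.sqrt s * Real.sqrt D + |G| := by
        rw [mul_assoc]; linarith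
end

section
/- Restricted bilinear form bound via RIP: if U ∈ ℝ^{n×d} has 3s-restricted isometry constant δ_{3s}, and u, v ∈ ℝ^d are vectors whose supports are both contained in a common set T with |T| ≤ 3s, then |⟨u, (UᵀU − I)v⟩| ≤ δ_{3s} ‖u‖₂ ‖v‖₂. -/
open Matrix

/-- Restricted bilinear form bound via RIP: if `U` has 3s-restricted isometry
constant `δ`, and `u, v` are supported in a common set `T` of size ≤ 3s, then
`|⟨u, (UᵀU − I) v⟩| ≤ δ ‖u‖₂ ‖v‖₂`. -/
theorem stmt_10 {n d s : ℕ} (U : Matrix (Fin n) (Fin d) ℝ) (δ : ℝ) (hδ : 0 ≤ δ)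
    (hRIP : ∀ T : Finset (Fin d), T.card ≤ 3 * s → ∀ x : Fin d → ℝ, (∀ i ∉ T, x i = 0) →
      (1 - δ) * (∑ i, (x i) ^ 2) ≤ (∑ j, (U.mulVec x j) ^ 2) ∧
      (∑ j, (U.mulVec x j) ^ 2) ≤ (1 + δ) * (∑ i, (x i) ^ 2))
    (T : Finset (Fin d)) (hT : T.card ≤ 3 * s)
    (u v : Fin d → ℝ) (hu : ∀ i ∉ T, u i = 0) (hv : ∀ i ∉ T, v i = 0) :
    |∑ i, u i * (Uᵀ.mulVec (U.mulVec v) i - v i)|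
      ≤ δ * Real.sqrt (∑ i, (u i) ^ 2) * Real.sqrt (∑ i, (v i) ^ 2) := by
  -- expansion lemma for sums of squares
  have expand : ∀ {ι : Type} [Fintype ι] (x y : ι → ℝ),
      ∑ i, (x i + y i) ^ 2 = ∑ i, (x i) ^ 2 + 2 * ∑ i, x i * y i + ∑ i, (y i) ^ 2 := by
    intro ι _ x y
    rw [Finset.mul_sum, ← Finset.sum_add_distrib, ← Finset.sum_add_distrib]
    exact Finset.sum_congr rfl (fun i _ => by ring)
  -- key bilinear bound
  have key : ∀ a b : Fin d → ℝ, (∀ i ∉ T, a i = 0) → (∀ i ∉ T, b i = 0) →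
      |∑ j, (U.mulVec a j) * (U.mulVec b j) - ∑ i, a i * b i|
        ≤ δ / 2 * (∑ i, (a i) ^ 2 + ∑ i, (b i) ^ 2) := by
    intro a b ha hb
    have hsum : ∀ i ∉ T, (a + b) i = 0 := fun i hi => by
      simp [ha i hi, hb i hi]
    have hdiff : ∀ i ∉ T, (a + (-1 : ℝ) • b) i = 0 := fun i hi => by
      simp [ha i hi, hb i hi]
    obtain ⟨h1, h2⟩ := hRIP T hT (a + b) hsum
    obtain ⟨h3, h4⟩ := hRIP T hT (a + (-1 : ℝ) • b) hdiff
    have e1 : U.mulVec (a + b) = fun j => U.mulVec a j + U.mulVec b j := by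
      rw [Matrix.mulVec_add]; rfl
    have e2 : U.mulVec (a + (-1 : ℝ) • b) = fun j => U.mulVec a j + (-1) * U.mulVec b j := by
      rw [Matrix.mulVec_add, Matrix.mulVec_smul]; rfl
    rw [e1, show (a + b) = fun i => a i + b i from rfl] at h1 h2
    rw [e2, show (a + (-1 : ℝ) • b) = fun i => a i + (-1) * b i from rfl] at h3 h4
    simp only [expand] at h1 h2 h3 h4
    have ea : ∑ i, ((-1 : ℝ) * b i) ^ 2 = ∑ i, (b i) ^ 2 :=
      Finset.sum_congr rfl (fun i _ => by ring)
    have eb : ∑ i, a i * ((-1 : ℝ) * b i) = -(∑ i, a i * b i) := by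
      rw [← Finset.sum_neg_distrib]
      exact Finset.sum_congr rfl (fun i _ => by ring)
    have ea' : ∑ j, ((-1 : ℝ) * U.mulVec b j) ^ 2 = ∑ j, (U.mulVec b j) ^ 2 :=
      Finset.sum_congr rfl (fun i _ => by ring)
    have eb' : ∑ j, U.mulVec a j * ((-1 : ℝ) * U.mulVec b j)
        = -(∑ j, U.mulVec a j * U.mulVec b j) := by
      rw [← Finset.sum_neg_distrib]
      exact Finset.sum_congr rfl (fun i _ => by ring)
    rw [ea, eb, ea', eb'] at h3 h4
    rw [abs_le]
    constructor <;> nlinarith [h1, h2, h3, h4]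
  -- rewrite the LHS as the bilinear form
  have hdot : ∑ i, u i * Uᵀ.mulVec (U.mulVec v) i = ∑ j, U.mulVec u j * U.mulVec v j := by
    have h := Matrix.dotProduct_mulVec u Uᵀ (U.mulVec v)
    rw [Matrix.vecMul_transpose] at h
    simpa [dotProduct] using h
  have lhs_eq : ∑ i, u i * (Uᵀ.mulVec (U.mulVec v) i - v i)
      = ∑ j, U.mulVec u j * U.mulVec v j - ∑ i, u i * v i := by
    rw [← hdot, ← Finset.sum_sub_distrib]
    exact Finset.sum_congr rfl (fun i _ => by ring)
  set nu := Real.sqrt (∑ i, (u i) ^ 2) with hnu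
  set nv := Real.sqrt (∑ i, (v i) ^ 2) with hnv
  have hNu : ∑ i, (u i) ^ 2 = nu ^ 2 := by
    rw [hnu, Real.sq_sqrt (Finset.sum_nonneg fun i _ => sq_nonneg _)]
  have hNv : ∑ i, (v i) ^ 2 = nv ^ 2 := by
    rw [hnv, Real.sq_sqrt (Finset.sum_nonneg fun i _ => sq_nonneg _)]
  have hnu0 : 0 ≤ nu := Real.sqrt_nonneg _
  have hnv0 : 0 ≤ nv := Real.sqrt_nonneg _
  rcases eq_or_lt_of_le hnu0 with h0 | hnupos
  · -- nu = 0 ⇒ u = 0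
    have : ∑ i, (u i) ^ 2 = 0 := by rw [hNu, ← h0]; ring
    have hu0 : ∀ i, u i = 0 := by
      intro i
      have := (Finset.sum_eq_zero_iff_of_nonneg (fun i _ => sq_nonneg (u i))).1 this i
        (Finset.mem_univ i)
      exact pow_eq_zero_iff (n := 2) (by norm_num) |>.1 this
    simp only [hu0, zero_mul, Finset.sum_const_zero, abs_zero]
    positivity
  rcases eq_or_lt_of_le hnv0 with h0 | hnvpos
  · have : ∑ i, (v i) ^ 2 = 0 := by rw [hNv, ← h0]; ring
    have hv0 : ∀ i, v i = 0 := by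
      intro i
      have := (Finset.sum_eq_zero_iff_of_nonneg (fun i _ => sq_nonneg (v i))).1 this i
        (Finset.mem_univ i)
      exact pow_eq_zero_iff (n := 2) (by norm_num) |>.1 this
    have hv0' : v = 0 := funext hv0
    subst hv0'
    simp only [Matrix.mulVec_zero, Pi.zero_apply, sub_zero, mul_zero, Finset.sum_const_zero,
      abs_zero]
    positivity
  -- apply key to scaled vectors
  have hk := key (nv • u) (nu • v) (fun i hi => by simp [hu i hi]) (fun i hi => by simp [hv i hi])
  have m1 : U.mulVec (nv • u) = fun j => nv * U.mulVec u j := by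
    rw [Matrix.mulVec_smul]; rfl
  have m2 : U.mulVec (nu • v) = fun j => nu * U.mulVec v j := by
    rw [Matrix.mulVec_smul]; rfl
  rw [m1, m2, show (nv • u) = fun i => nv * u i from rfl,
    show (nu • v) = fun i => nu * v i from rfl] at hk
  have s1 : ∑ j, (nv * U.mulVec u j) * (nu * U.mulVec v j)
      = nv * nu * ∑ j, U.mulVec u j * U.mulVec v j := by
    rw [Finset.mul_sum]; exact Finset.sum_congr rfl (fun i _ => by ring)
  have s2 : ∑ i, (nv * u i) * (nu * v i) = nv * nu * ∑ i, u i * v i := by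
    rw [Finset.mul_sum]; exact Finset.sum_congr rfl (fun i _ => by ring)
  have s3 : ∑ i, (nv * u i) ^ 2 = nv ^ 2 * nu ^ 2 := by
    rw [← hNu, Finset.mul_sum]; exact Finset.sum_congr rfl (fun i _ => by ring)
  have s4 : ∑ i, (nu * v i) ^ 2 = nu ^ 2 * nv ^ 2 := by
    rw [← hNv, Finset.mul_sum]; exact Finset.sum_congr rfl (fun i _ => by ring)
  rw [s1, s2, s3, s4, ← mul_sub, abs_mul,
    abs_of_pos (mul_pos hnvpos hnupos)] at hk
  rw [lhs_eq]
  have hpos : 0 < nv * nu := mul_pos hnvpos hnupos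
  have h2 : nv * nu * |∑ j, U.mulVec u j * U.mulVec v j - ∑ i, u i * v i|
      ≤ nv * nu * (δ * nu * nv) := by nlinarith [hk]
  have := le_of_mul_le_mul_left h2 hpos
  linarith
end

section
/- Top-s magnitude bound (Proposition 1 of the paper, key step): let x^a ∈ ℝ^d be a vector supported on a set S^a with |S^a| ≤ s, let δ_s be the s-restricted isometry constant of U, and let S' be any index set with |S'| ≤ s (S' may intersect supp(x^a)). Suppose v = Uᵀ U_{S^a}[x^a]_{S^a}. If S'₁ = S' ∩ S^a and S'₂ = S' \ S^a, then ‖[v − x^a]_{S'₁}‖₂ ≤ δ_s‖[x^a]_{S^a}‖₂ and ‖[v]_{S'₂}‖₂ ≤ θ_{s,s}‖[x^a]_{S^a}‖₂, where θ_{s,s} is the (s,s)-restricted orthogonality constant. -/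
open Matrix

/-- Polarization half-bound from RIP. -/
private lemma half_bound {n d s : ℕ} (U : Matrix (Fin n) (Fin d) ℝ) (δ : ℝ)
    (hRIP : ∀ T : Finset (Fin d), T.card ≤ s → ∀ x : Fin d → ℝ, (∀ i ∉ T, x i = 0) →
      (1 - δ) * (∑ i, (x i) ^ 2) ≤ (∑ j, (U.mulVec x j) ^ 2) ∧
      (∑ j, (U.mulVec x j) ^ 2) ≤ (1 + δ) * (∑ i, (x i) ^ 2))
    (T : Finset (Fin d)) (hT : T.card ≤ s)
    (a b : Fin d → ℝ) (ha : ∀ i ∉ T, a i = 0) (hb : ∀ i ∉ T, b i = 0) :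
    (∑ j, U.mulVec a j * U.mulVec b j) - ∑ i, a i * b i
      ≤ δ / 2 * ((∑ i, (a i) ^ 2) + ∑ i, (b i) ^ 2) := by
  have hab : ∀ i ∉ T, (a + b) i = 0 := fun i hi => by simp [ha i hi, hb i hi]
  have hab' : ∀ i ∉ T, (a - b) i = 0 := fun i hi => by simp [ha i hi, hb i hi]
  have h1 := (hRIP T hT (a + b) hab).2
  have h2 := (hRIP T hT (a - b) hab').1
  have e1 : ∑ j, (U.mulVec (a + b) j) ^ 2
      = (∑ j, (U.mulVec a j) ^ 2) + 2 * (∑ j, U.mulVec a j * U.mulVec b j)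
        + ∑ j, (U.mulVec b j) ^ 2 := by
    simp only [Matrix.mulVec_add, Pi.add_apply]
    rw [Finset.mul_sum, ← Finset.sum_add_distrib, ← Finset.sum_add_distrib]
    exact Finset.sum_congr rfl fun j _ => by ring
  have e2 : ∑ j, (U.mulVec (a - b) j) ^ 2
      = (∑ j, (U.mulVec a j) ^ 2) - 2 * (∑ j, U.mulVec a j * U.mulVec b j)
        + ∑ j, (U.mulVec b j) ^ 2 := by
    simp only [Matrix.mulVec_sub, Pi.sub_apply]
    rw [Finset.mul_sum]
    rw [show (∑ j, (U.mulVec a j - U.mulVec b j) ^ 2)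
        = ∑ j, ((U.mulVec a j) ^ 2 - 2 * (U.mulVec a j * U.mulVec b j)
          + (U.mulVec b j) ^ 2) from Finset.sum_congr rfl fun j _ => by ring]
    rw [Finset.sum_add_distrib, Finset.sum_sub_distrib]
  have e3 : ∑ i, ((a + b) i) ^ 2
      = (∑ i, (a i) ^ 2) + 2 * (∑ i, a i * b i) + ∑ i, (b i) ^ 2 := by
    simp only [Pi.add_apply]
    rw [Finset.mul_sum, ← Finset.sum_add_distrib, ← Finset.sum_add_distrib]
    exact Finset.sum_congr rfl fun i _ => by ring
  have e4 : ∑ i, ((a - b) i) ^ 2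
      = (∑ i, (a i) ^ 2) - 2 * (∑ i, a i * b i) + ∑ i, (b i) ^ 2 := by
    simp only [Pi.sub_apply]
    rw [Finset.mul_sum]
    rw [show (∑ i, (a i - b i) ^ 2)
        = ∑ i, ((a i) ^ 2 - 2 * (a i * b i) + (b i) ^ 2) from
        Finset.sum_congr rfl fun i _ => by ring]
    rw [Finset.sum_add_distrib, Finset.sum_sub_distrib]
  rw [e1, e3] at h1
  rw [e2, e4] at h2
  nlinarith [h1, h2]

/-- Near-isometry of inner products on a common support set. -/
private lemma ip_bound {n d s : ℕ} (U : Matrix (Fin n) (Fin d) ℝ) (δ : ℝ) (hδ : 0 ≤ δ)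
    (hRIP : ∀ T : Finset (Fin d), T.card ≤ s → ∀ x : Fin d → ℝ, (∀ i ∉ T, x i = 0) →
      (1 - δ) * (∑ i, (x i) ^ 2) ≤ (∑ j, (U.mulVec x j) ^ 2) ∧
      (∑ j, (U.mulVec x j) ^ 2) ≤ (1 + δ) * (∑ i, (x i) ^ 2))
    (T : Finset (Fin d)) (hT : T.card ≤ s)
    (a b : Fin d → ℝ) (ha : ∀ i ∉ T, a i = 0) (hb : ∀ i ∉ T, b i = 0) :
    (∑ j, U.mulVec a j * U.mulVec b j) - ∑ i, a i * b i
      ≤ δ * Real.sqrt (∑ i, (a i) ^ 2) * Real.sqrt (∑ i, (b i) ^ 2) := by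
  have hA : (0:ℝ) ≤ ∑ i, (a i) ^ 2 := Finset.sum_nonneg fun i _ => sq_nonneg _
  have hB : (0:ℝ) ≤ ∑ i, (b i) ^ 2 := Finset.sum_nonneg fun i _ => sq_nonneg _
  by_cases hA0 : (∑ i, (a i) ^ 2) = 0
  · have ha0 : ∀ i, a i = 0 := by
      intro i
      have := (Finset.sum_eq_zero_iff_of_nonneg (fun i _ => sq_nonneg (a i))).1 hA0 i
        (Finset.mem_univ i)
      exact pow_eq_zero_iff (by norm_num) |>.1 this
    have : (a : Fin d → ℝ) = 0 := funext ha0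
    subst this
    simp only [Matrix.mulVec_zero, Pi.zero_apply, zero_mul, Finset.sum_const_zero,
      sub_zero]
    positivity
  by_cases hB0 : (∑ i, (b i) ^ 2) = 0
  · have hb0 : ∀ i, b i = 0 := by
      intro i
      have := (Finset.sum_eq_zero_iff_of_nonneg (fun i _ => sq_nonneg (b i))).1 hB0 i
        (Finset.mem_univ i)
      exact pow_eq_zero_iff (by norm_num) |>.1 this
    have : (b : Fin d → ℝ) = 0 := funext hb0
    subst this
    simp only [Matrix.mulVec_zero, Pi.zero_apply, mul_zero, Finset.sum_const_zero,
      sub_zero]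
    positivity
  set α := Real.sqrt (∑ i, (a i) ^ 2) with hα
  set β := Real.sqrt (∑ i, (b i) ^ 2) with hβ
  have hαpos : 0 < α := Real.sqrt_pos.2 (lt_of_le_of_ne hA (Ne.symm hA0))
  have hβpos : 0 < β := Real.sqrt_pos.2 (lt_of_le_of_ne hB (Ne.symm hB0))
  have hα2 : α ^ 2 = ∑ i, (a i) ^ 2 := Real.sq_sqrt hA
  have hβ2 : β ^ 2 = ∑ i, (b i) ^ 2 := Real.sq_sqrt hB
  set t := Real.sqrt (β / α) with htdef
  have htpos : 0 < t := Real.sqrt_pos.2 (div_pos hβpos hαpos)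
  have ht2 : t ^ 2 = β / α := Real.sq_sqrt (le_of_lt (div_pos hβpos hαpos))
  have key := half_bound U δ hRIP T hT (fun i => t * a i) (fun i => b i / t)
    (fun i hi => by simp [ha i hi]) (fun i hi => by simp [hb i hi])
  have hma : U.mulVec (fun i => t * a i) = fun j => t * U.mulVec a j := by
    funext j
    simp only [Matrix.mulVec, dotProduct, Finset.mul_sum]
    exact Finset.sum_congr rfl fun i _ => by ring
  have hmb : U.mulVec (fun i => b i / t) = fun j => U.mulVec b j / t := by
    funext j
    simp only [Matrix.mulVec, dotProduct, Finset.sum_div]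
    exact Finset.sum_congr rfl fun i _ => by ring
  rw [hma, hmb] at key
  have ht0 : t ≠ 0 := ne_of_gt htpos
  have k1 : (∑ j, (t * U.mulVec a j) * (U.mulVec b j / t))
      = ∑ j, U.mulVec a j * U.mulVec b j :=
    Finset.sum_congr rfl fun j _ => by field_simp
  have k2 : (∑ i, (t * a i) * (b i / t)) = ∑ i, a i * b i :=
    Finset.sum_congr rfl fun i _ => by field_simp
  have k3 : (∑ i, (t * a i) ^ 2) = t ^ 2 * ∑ i, (a i) ^ 2 := by
    rw [Finset.mul_sum]; exact Finset.sum_congr rfl fun i _ => by ring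
  have k4 : (∑ i, (b i / t) ^ 2) = (∑ i, (b i) ^ 2) / t ^ 2 := by
    rw [Finset.sum_div]; exact Finset.sum_congr rfl fun i _ => by ring
  rw [k1, k2, k3, k4] at key
  have hr : t ^ 2 * (∑ i, (a i) ^ 2) = α * β := by
    rw [ht2, ← hα2]; field_simp
  have hr2 : (∑ i, (b i) ^ 2) / t ^ 2 = α * β := by
    rw [ht2, ← hβ2]; field_simp
  rw [hr, hr2] at key
  calc (∑ j, U.mulVec a j * U.mulVec b j) - ∑ i, a i * b i
      ≤ δ / 2 * (α * β + α * β) := key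
    _ = δ * α * β := by ring

/-- Key step of Proposition 1: for `xa` supported on `Sa` with `|Sa| ≤ s`,
`v = Uᵀ U_{Sa} [xa]_{Sa} = Uᵀ U xa`, and any `S'` with `|S'| ≤ s`, with
`S'₁ = S' ∩ Sa` and `S'₂ = S' \ Sa`, we have
`‖[v − xa]_{S'₁}‖₂ ≤ δ_s ‖[xa]_{Sa}‖₂` and `‖[v]_{S'₂}‖₂ ≤ θ_{s,s} ‖[xa]_{Sa}‖₂`. -/
theorem stmt_11 {n d s : ℕ} (U : Matrix (Fin n) (Fin d) ℝ) (δ θ : ℝ)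
    (hδ : 0 ≤ δ) (hθ : 0 ≤ θ)
    (hRIP : ∀ T : Finset (Fin d), T.card ≤ s → ∀ x : Fin d → ℝ, (∀ i ∉ T, x i = 0) →
      (1 - δ) * (∑ i, (x i) ^ 2) ≤ (∑ j, (U.mulVec x j) ^ 2) ∧
      (∑ j, (U.mulVec x j) ^ 2) ≤ (1 + δ) * (∑ i, (x i) ^ 2))
    (hRO : ∀ T T' : Finset (Fin d), Disjoint T T' → T.card ≤ s → T'.card ≤ s →
      ∀ x x' : Fin d → ℝ, (∀ i ∉ T, x i = 0) → (∀ i ∉ T', x' i = 0) →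
      |∑ j, U.mulVec x j * U.mulVec x' j|
        ≤ θ * Real.sqrt (∑ i, (x i) ^ 2) * Real.sqrt (∑ i, (x' i) ^ 2))
    (xa : Fin d → ℝ) (Sa : Finset (Fin d)) (hxa : ∀ i ∉ Sa, xa i = 0)
    (hSa : Sa.card ≤ s)
    (S' : Finset (Fin d)) (hS' : S'.card ≤ s)
    (v : Fin d → ℝ) (hv : v = Uᵀ.mulVec (U.mulVec xa)) :
    Real.sqrt (∑ i ∈ S' ∩ Sa, (v i - xa i) ^ 2)
        ≤ δ * Real.sqrt (∑ i, (xa i) ^ 2) ∧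
    Real.sqrt (∑ i ∈ S' \ Sa, (v i) ^ 2)
        ≤ θ * Real.sqrt (∑ i, (xa i) ^ 2) := by
  have hX : (0:ℝ) ≤ ∑ i, (xa i) ^ 2 := Finset.sum_nonneg fun i _ => sq_nonneg _
  set X := Real.sqrt (∑ i, (xa i) ^ 2) with hXdef
  have hXnn : 0 ≤ X := Real.sqrt_nonneg _
  -- key identity: for any w, ∑ w i * v i = ∑ (Uw)_j (Uxa)_j
  have hdot : ∀ w : Fin d → ℝ, (∑ i, w i * v i) = ∑ j, U.mulVec w j * U.mulVec xa j := by
    intro w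
    rw [hv]
    have : (∑ i, w i * Uᵀ.mulVec (U.mulVec xa) i)
        = w ⬝ᵥ (Uᵀ.mulVec (U.mulVec xa)) := rfl
    rw [this, Matrix.dotProduct_mulVec, Matrix.vecMul_transpose]
    rfl
  constructor
  · -- part 1
    set w : Fin d → ℝ := fun i => if i ∈ S' ∩ Sa then v i - xa i else 0 with hwdef
    have hwsupp : ∀ i ∉ Sa, w i = 0 := by
      intro i hi
      simp only [hwdef]
      rw [if_neg (fun h => hi (Finset.mem_inter.1 h).2)]
    have hsum : (∑ i, w i ^ 2) = ∑ i ∈ S' ∩ Sa, (v i - xa i) ^ 2 := by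
      rw [show (∑ i, w i ^ 2)
          = ∑ i, (if i ∈ S' ∩ Sa then (v i - xa i) ^ 2 else 0) from
          Finset.sum_congr rfl fun i _ => by simp only [hwdef]; split <;> simp]
      rw [Finset.sum_ite_mem, Finset.univ_inter]
    set A := ∑ i ∈ S' ∩ Sa, (v i - xa i) ^ 2 with hAdef
    have hAnn : 0 ≤ A := Finset.sum_nonneg fun i _ => sq_nonneg _
    have hid : A = (∑ i, w i * v i) - ∑ i, w i * xa i := by
      rw [← Finset.sum_sub_distrib, ← hsum]
      exact Finset.sum_congr rfl fun i _ => by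
        simp only [hwdef]; split <;> ring
    rw [hdot w] at hid
    have key := ip_bound U δ hδ hRIP Sa hSa w xa hwsupp hxa
    rw [hsum, ← hid] at key
    -- key : A ≤ δ * √A * X
    have hAsq : Real.sqrt A * Real.sqrt A = A := Real.mul_self_sqrt hAnn
    have hAs : 0 ≤ Real.sqrt A := Real.sqrt_nonneg _
    by_cases hA0 : Real.sqrt A = 0
    · rw [hA0]; positivity
    · have : 0 < Real.sqrt A := lt_of_le_of_ne hAs (Ne.symm hA0)
      nlinarith [key, hAsq, this]
  · -- part 2
    set w : Fin d → ℝ := fun i => if i ∈ S' \ Sa then v i else 0 with hwdef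
    have hwsupp : ∀ i ∉ S' \ Sa, w i = 0 := by
      intro i hi; simp only [hwdef]; rw [if_neg hi]
    have hsum : (∑ i, w i ^ 2) = ∑ i ∈ S' \ Sa, (v i) ^ 2 := by
      rw [show (∑ i, w i ^ 2)
          = ∑ i, (if i ∈ S' \ Sa then (v i) ^ 2 else 0) from
          Finset.sum_congr rfl fun i _ => by simp only [hwdef]; split <;> simp]
      rw [Finset.sum_ite_mem, Finset.univ_inter]
    set B := ∑ i ∈ S' \ Sa, (v i) ^ 2 with hBdef
    have hBnn : 0 ≤ B := Finset.sum_nonneg fun i _ => sq_nonneg _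
    have hid : B = ∑ i, w i * v i := by
      rw [← hsum]
      exact Finset.sum_congr rfl fun i _ => by
        simp only [hwdef]; split <;> ring
    rw [hdot w] at hid
    have hdisj : Disjoint (S' \ Sa) Sa := Finset.sdiff_disjoint
    have hcard : (S' \ Sa).card ≤ s := le_trans (Finset.card_le_card (Finset.sdiff_subset)) hS'
    have key := hRO (S' \ Sa) Sa hdisj hcard hSa w xa hwsupp hxa
    rw [hsum] at key
    have key2 : B ≤ θ * Real.sqrt B * X := le_trans (hid ▸ le_abs_self _) key
    have hBsq : Real.sqrt B * Real.sqrt B = B := Real.mul_self_sqrt hBnn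
    have hBs : 0 ≤ Real.sqrt B := Real.sqrt_nonneg _
    by_cases hB0 : Real.sqrt B = 0
    · rw [hB0]; positivity
    · have : 0 < Real.sqrt B := lt_of_le_of_ne hBs (Ne.symm hB0)
      nlinarith [key2, hBsq, this]
end

section
/- One-step error contraction in the noiseless setting (Proposition 2 of the paper): Let x_* ∈ ℝ^d be s-sparse, y = U x_*, and suppose the supports satisfy |supp(x_*) ∪ supp(x_t) ∪ supp(x_{t+1})| ≤ 3s, where x_{t+1} is the minimizer of (1/2)‖x − (x_t − Uᵀ(U x_t − y))‖₂² + λ_t‖x‖₁. If ‖x_t − x_*‖₂ ≤ Δ_t and λ_t = (δ_s + √2 θ_{s,s})Δ_t/√s, and U has restricted isometry constant δ_{3s}, then ‖x_{t+1} − x_*‖₂ ≤ (δ_s + √2 θ_{s,s} + δ_{3s})Δ_t. -/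
open Matrix



private lemma stmt_13_aux_polar {δ C UC P Q UP UQ : ℝ}
    (hP1 : (1 - δ) * (P + 2 * C + Q) ≤ UP + 2 * UC + UQ)
    (hP2 : UP + 2 * UC + UQ ≤ (1 + δ) * (P + 2 * C + Q))
    (hM1 : (1 - δ) * (P - 2 * C + Q) ≤ UP - 2 * UC + UQ)
    (hM2 : UP - 2 * UC + UQ ≤ (1 + δ) * (P - 2 * C + Q)) :
    |C - UC| ≤ δ / 2 * (P + Q) := by
  rw [abs_le]
  constructor <;> nlinarith

private lemma stmt_13_aux_opt {G H : ℝ} (hH : 0 ≤ H)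
    (key : ∀ t : ℝ, 0 < t → t ≤ 1 → 0 ≤ t * G + t ^ 2 / 2 * H) : 0 ≤ G := by
  by_contra hGc
  push_neg at hGc
  rcases eq_or_lt_of_le hH with h1 | h1
  · have := key 1 one_pos le_rfl
    nlinarith
  · have ht0 : 0 < min 1 (-G / H) := lt_min one_pos (div_pos (by linarith) h1)
    have ht1 : min 1 (-G / H) ≤ 1 := min_le_left _ _
    have h3 : min 1 (-G / H) * H ≤ -G := (le_div_iff₀ h1).mp (min_le_right _ _)
    have hk := key _ ht0 ht1
    nlinarith [mul_le_mul_of_nonneg_left h3 ht0.le, mul_pos ht0 (neg_pos.mpr hGc)]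

/-- One-step error contraction in the noiseless setting (Proposition 2): with
`y = U x_*`, `x_*` s-sparse, the combined supports of size ≤ 3s, `‖x_t − x_*‖₂ ≤ Δ`,
and `λ = (δ_s + √2 θ_{s,s}) Δ / √s`, the proximal step satisfies
`‖x_{t+1} − x_*‖₂ ≤ (δ_s + √2 θ_{s,s} + δ_{3s}) Δ`. -/
theorem stmt_13 {n d s : ℕ} (hs : 0 < s)
    (U : Matrix (Fin n) (Fin d) ℝ) (xstar xt xt1 : Fin d → ℝ) (y : Fin n → ℝ)
    (δs θ δ3s Δ lam : ℝ) (hδs : 0 ≤ δs) (hθ : 0 ≤ θ) (hδ3s : 0 ≤ δ3s)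
    (hy : y = U.mulVec xstar)
    (hxstar : (Finset.univ.filter (fun i => xstar i ≠ 0)).card ≤ s)
    (hRIPs : ∀ T : Finset (Fin d), T.card ≤ s → ∀ x : Fin d → ℝ, (∀ i ∉ T, x i = 0) →
      (1 - δs) * (∑ i, (x i) ^ 2) ≤ (∑ j, (U.mulVec x j) ^ 2) ∧
      (∑ j, (U.mulVec x j) ^ 2) ≤ (1 + δs) * (∑ i, (x i) ^ 2))
    (hRO : ∀ T T' : Finset (Fin d), Disjoint T T' → T.card ≤ s → T'.card ≤ s →
      ∀ x x' : Fin d → ℝ, (∀ i ∉ T, x i = 0) → (∀ i ∉ T', x' i = 0) →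
      |∑ j, U.mulVec x j * U.mulVec x' j|
        ≤ θ * Real.sqrt (∑ i, (x i) ^ 2) * Real.sqrt (∑ i, (x' i) ^ 2))
    (hRIP3s : ∀ T : Finset (Fin d), T.card ≤ 3 * s → ∀ x : Fin d → ℝ, (∀ i ∉ T, x i = 0) →
      (1 - δ3s) * (∑ i, (x i) ^ 2) ≤ (∑ j, (U.mulVec x j) ^ 2) ∧
      (∑ j, (U.mulVec x j) ^ 2) ≤ (1 + δ3s) * (∑ i, (x i) ^ 2))
    (hsupp : (Finset.univ.filter (fun i => xstar i ≠ 0) ∪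
              Finset.univ.filter (fun i => xt i ≠ 0) ∪
              Finset.univ.filter (fun i => xt1 i ≠ 0)).card ≤ 3 * s)
    (hmin : ∀ z : Fin d → ℝ,
      (1 / 2) * (∑ i, (xt1 i - (xt i - Uᵀ.mulVec (U.mulVec xt - y) i)) ^ 2)
          + lam * ∑ i, |xt1 i|
        ≤ (1 / 2) * (∑ i, (z i - (xt i - Uᵀ.mulVec (U.mulVec xt - y) i)) ^ 2)
          + lam * ∑ i, |z i|)
    (hΔ : Real.sqrt (∑ i, (xt i - xstar i) ^ 2) ≤ Δ)
    (hlam : lam = (δs + Real.sqrt 2 * θ) * Δ / Real.sqrt s) :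
    Real.sqrt (∑ i, (xt1 i - xstar i) ^ 2)
      ≤ (δs + Real.sqrt 2 * θ + δ3s) * Δ := by
  classical
  -- notation
  set g : Fin d → ℝ := fun i => xt i - xstar i with hgdef
  set h : Fin d → ℝ := fun i => xt1 i - xstar i with hhdef
  have hgi : ∀ i, g i = xt i - xstar i := fun i => rfl
  have hhi : ∀ i, h i = xt1 i - xstar i := fun i => rfl
  set a : ℝ := Real.sqrt (∑ i, (h i) ^ 2) with hadef
  set b : ℝ := Real.sqrt (∑ i, (g i) ^ 2) with hbdef
  have ha0 : 0 ≤ a := Real.sqrt_nonneg _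
  have hb0 : 0 ≤ b := Real.sqrt_nonneg _
  have hΔ0 : 0 ≤ Δ := le_trans (Real.sqrt_nonneg _) hΔ
  have hbΔ : b ≤ Δ := by
    rw [hbdef]; simpa [hgi] using hΔ
  have ha2 : a ^ 2 = ∑ i, (h i) ^ 2 := Real.sq_sqrt (by positivity)
  have hb2 : b ^ 2 = ∑ i, (g i) ^ 2 := Real.sq_sqrt (by positivity)
  have hlam0 : 0 ≤ lam := by
    rw [hlam]
    exact div_nonneg (mul_nonneg (add_nonneg hδs (mul_nonneg (Real.sqrt_nonneg 2) hθ)) hΔ0)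
      (Real.sqrt_nonneg _)
  set T : Finset (Fin d) := Finset.univ.filter (fun i => xstar i ≠ 0) ∪
      Finset.univ.filter (fun i => xt i ≠ 0) ∪
      Finset.univ.filter (fun i => xt1 i ≠ 0) with hTdef
  have hTcard : T.card ≤ 3 * s := hsupp
  have hmemT : ∀ i, i ∉ T → xstar i = 0 ∧ xt i = 0 ∧ xt1 i = 0 := by
    intro i hi
    rw [hTdef] at hi
    simp only [Finset.mem_union, Finset.mem_filter, Finset.mem_univ, true_and, not_or,
      not_not] at hi
    tauto
  have hsupg : ∀ i ∉ T, g i = 0 := by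
    intro i hi
    obtain ⟨h1, h2, h3⟩ := hmemT i hi
    rw [hgi, h1, h2]; ring
  have hsuph : ∀ i ∉ T, h i = 0 := by
    intro i hi
    obtain ⟨h1, h2, h3⟩ := hmemT i hi
    rw [hhi, h1, h3]; ring
  -- abbreviations for the optimality analysis
  set ip : ℝ := ∑ i, (xstar i - xt1 i) *
      (xt1 i - (xt i - Uᵀ.mulVec (U.mulVec xt - y) i)) with hipdef
  set H : ℝ := ∑ i, (xstar i - xt1 i) ^ 2 with hHdef
  set L0 : ℝ := ∑ i, |xt1 i| with hL0def
  set L1 : ℝ := ∑ i, |xstar i| with hL1def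
  -- Step A : first-order optimality
  have key : ∀ t : ℝ, 0 < t → t ≤ 1 →
      0 ≤ t * (ip + lam * (L1 - L0)) + t ^ 2 / 2 * H := by
    intro t ht0 ht1
    have hmin' := hmin (fun i => xt1 i + t * (xstar i - xt1 i))
    have hq : ∑ i, ((xt1 i + t * (xstar i - xt1 i)) -
          (xt i - Uᵀ.mulVec (U.mulVec xt - y) i)) ^ 2
        = (∑ i, (xt1 i - (xt i - Uᵀ.mulVec (U.mulVec xt - y) i)) ^ 2)
          + 2 * t * ip + t ^ 2 * H := by
      rw [hipdef, hHdef, Finset.mul_sum, Finset.mul_sum, ← Finset.sum_add_distrib,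
        ← Finset.sum_add_distrib]
      exact Finset.sum_congr rfl fun i _ => by ring
    have habs : ∑ i, |xt1 i + t * (xstar i - xt1 i)| ≤ (1 - t) * L0 + t * L1 := by
      rw [hL0def, hL1def, Finset.mul_sum, Finset.mul_sum, ← Finset.sum_add_distrib]
      apply Finset.sum_le_sum
      intro i _
      have e : xt1 i + t * (xstar i - xt1 i) = (1 - t) * xt1 i + t * xstar i := by ring
      rw [e]
      calc |(1 - t) * xt1 i + t * xstar i| ≤ |(1 - t) * xt1 i| + |t * xstar i| := abs_add_le _ _
        _ = (1 - t) * |xt1 i| + t * |xstar i| := by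
            rw [abs_mul, abs_mul, abs_of_nonneg (by linarith), abs_of_nonneg ht0.le]
    have habs' : lam * ∑ i, |xt1 i + t * (xstar i - xt1 i)|
        ≤ lam * ((1 - t) * L0 + t * L1) := mul_le_mul_of_nonneg_left habs hlam0
    rw [hq] at hmin'

    nlinarith [hmin', habs']
  -- G ≥ 0
  have hH0 : 0 ≤ H := by rw [hHdef]; positivity
  have hG : 0 ≤ ip + lam * (L1 - L0) := stmt_13_aux_opt hH0 key
  -- rewrite ip
  have hVg : ∀ i, Uᵀ.mulVec (U.mulVec xt - y) i = Uᵀ.mulVec (U.mulVec g) i := by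
    intro i
    have : U.mulVec xt - y = U.mulVec g := by
      rw [hy, ← Matrix.mulVec_sub]
      congr 1
    rw [this]
  have hdot : ∑ i, h i * Uᵀ.mulVec (U.mulVec g) i
      = ∑ j, U.mulVec h j * U.mulVec g j := by
    have e : h ⬝ᵥ (Uᵀ *ᵥ (U *ᵥ g)) = (U *ᵥ h) ⬝ᵥ (U *ᵥ g) := by
      rw [Matrix.dotProduct_mulVec, Matrix.vecMul_transpose]
    simpa [dotProduct] using e
  have hip2 : ip = -(∑ i, (h i) ^ 2) + (∑ i, h i * g i)
      - ∑ j, U.mulVec h j * U.mulVec g j := by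
    have e : ∀ i, (xstar i - xt1 i) * (xt1 i - (xt i - Uᵀ.mulVec (U.mulVec xt - y) i))
        = -((h i) ^ 2) + h i * g i - h i * Uᵀ.mulVec (U.mulVec g) i := by
      intro i
      rw [hVg i, hgi, hhi]
      ring
    rw [hipdef, Finset.sum_congr rfl (fun i _ => e i), Finset.sum_sub_distrib,
      Finset.sum_add_distrib, Finset.sum_neg_distrib, hdot]
  -- Step C : polarization bound
  have polar : ∀ p q : Fin d → ℝ, (∀ i ∉ T, p i = 0) → (∀ i ∉ T, q i = 0) →
      |(∑ i, p i * q i) - ∑ j, U.mulVec p j * U.mulVec q j|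
        ≤ δ3s / 2 * ((∑ i, (p i) ^ 2) + ∑ i, (q i) ^ 2) := by
    intro p q hp hq
    have hpq1 : ∀ i ∉ T, p i + q i = 0 := fun i hi => by rw [hp i hi, hq i hi]; ring
    have hpq2 : ∀ i ∉ T, p i - q i = 0 := fun i hi => by rw [hp i hi, hq i hi]; ring
    obtain ⟨hP1, hP2⟩ := hRIP3s T hTcard (fun i => p i + q i) hpq1
    obtain ⟨hM1, hM2⟩ := hRIP3s T hTcard (fun i => p i - q i) hpq2
    have e1 : ∀ j, U.mulVec (fun i => p i + q i) j = U.mulVec p j + U.mulVec q j := by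
      intro j
      simp [Matrix.mulVec, dotProduct, mul_add, Finset.sum_add_distrib]
    have e2 : ∀ j, U.mulVec (fun i => p i - q i) j = U.mulVec p j - U.mulVec q j := by
      intro j
      simp [Matrix.mulVec, dotProduct, mul_sub, Finset.sum_sub_distrib]
    simp only [e1] at hP1 hP2
    simp only [e2] at hM1 hM2
    have eP : ∑ i, (p i + q i) ^ 2
        = (∑ i, (p i) ^ 2) + 2 * (∑ i, p i * q i) + ∑ i, (q i) ^ 2 := by
      rw [Finset.mul_sum, ← Finset.sum_add_distrib, ← Finset.sum_add_distrib]
      exact Finset.sum_congr rfl fun i _ => by ring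
    have eM : ∑ i, (p i - q i) ^ 2
        = (∑ i, (p i) ^ 2) - 2 * (∑ i, p i * q i) + ∑ i, (q i) ^ 2 := by
      rw [Finset.mul_sum]
      rw [show (∑ i, (p i) ^ 2) - (∑ i, 2 * (p i * q i)) + ∑ i, (q i) ^ 2
          = ∑ i, ((p i) ^ 2 - 2 * (p i * q i) + (q i) ^ 2) by
        rw [Finset.sum_add_distrib, Finset.sum_sub_distrib]]
      exact Finset.sum_congr rfl fun i _ => by ring
    have eUP : ∑ j, (U.mulVec p j + U.mulVec q j) ^ 2
        = (∑ j, (U.mulVec p j) ^ 2) + 2 * (∑ j, U.mulVec p j * U.mulVec q j)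
          + ∑ j, (U.mulVec q j) ^ 2 := by
      rw [Finset.mul_sum, ← Finset.sum_add_distrib, ← Finset.sum_add_distrib]
      exact Finset.sum_congr rfl fun j _ => by ring
    have eUM : ∑ j, (U.mulVec p j - U.mulVec q j) ^ 2
        = (∑ j, (U.mulVec p j) ^ 2) - 2 * (∑ j, U.mulVec p j * U.mulVec q j)
          + ∑ j, (U.mulVec q j) ^ 2 := by
      rw [Finset.mul_sum]
      rw [show (∑ j, (U.mulVec p j) ^ 2) - (∑ j, 2 * (U.mulVec p j * U.mulVec q j))
            + ∑ j, (U.mulVec q j) ^ 2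
          = ∑ j, ((U.mulVec p j) ^ 2 - 2 * (U.mulVec p j * U.mulVec q j)
            + (U.mulVec q j) ^ 2) by
        rw [Finset.sum_add_distrib, Finset.sum_sub_distrib]]
      exact Finset.sum_congr rfl fun j _ => by ring
    rw [eP, eUP] at hP1 hP2
    rw [eM, eUM] at hM1 hM2
    exact stmt_13_aux_polar hP1 hP2 hM1 hM2
  -- scaled polarization : |⟨h,g⟩ − ⟨Uh,Ug⟩| ≤ δ3s a b
  have hCS : |(∑ i, h i * g i) - ∑ j, U.mulVec h j * U.mulVec g j| ≤ δ3s * a * b := by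
    rcases eq_or_lt_of_le ha0 with haz | hap
    · have hz : ∑ i, (h i) ^ 2 = 0 := by
        rw [← ha2, ← haz]; ring
      have hhz : ∀ i, h i = 0 := by
        intro i
        have := (Finset.sum_eq_zero_iff_of_nonneg (fun i _ => sq_nonneg (h i))).mp hz i
          (Finset.mem_univ i)
        exact pow_eq_zero_iff (n := 2) (by norm_num) |>.mp this
      have hU : ∀ j, U.mulVec h j = 0 := by
        intro j
        simp [Matrix.mulVec, dotProduct, hhz]
      simp [hhz, hU, ← haz]
    · rcases eq_or_lt_of_le hb0 with hbz | hbp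
      · have hz : ∑ i, (g i) ^ 2 = 0 := by
          rw [← hb2, ← hbz]; ring
        have hgz : ∀ i, g i = 0 := by
          intro i
          have := (Finset.sum_eq_zero_iff_of_nonneg (fun i _ => sq_nonneg (g i))).mp hz i
            (Finset.mem_univ i)
          exact pow_eq_zero_iff (n := 2) (by norm_num) |>.mp this
        have hU : ∀ j, U.mulVec g j = 0 := by
          intro j
          simp [Matrix.mulVec, dotProduct, hgz]
        simp [hgz, hU, ← hbz]
      · -- both positive : scale
        have hp' : ∀ i ∉ T, b * h i = 0 := fun i hi => by rw [hsuph i hi]; ring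
        have hq' : ∀ i ∉ T, a * g i = 0 := fun i hi => by rw [hsupg i hi]; ring
        have := polar (fun i => b * h i) (fun i => a * g i) hp' hq'
        have eU1 : ∀ j, U.mulVec (fun i => b * h i) j = b * U.mulVec h j := by
          intro j
          simp [Matrix.mulVec, dotProduct, Finset.mul_sum]
          exact Finset.sum_congr rfl fun i _ => by ring
        have eU2 : ∀ j, U.mulVec (fun i => a * g i) j = a * U.mulVec g j := by
          intro j
          simp [Matrix.mulVec, dotProduct, Finset.mul_sum]
          exact Finset.sum_congr rfl fun i _ => by ring
        simp only [eU1, eU2] at this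
        have E1 : ∑ i, (b * h i) * (a * g i) = a * b * ∑ i, h i * g i := by
          rw [Finset.mul_sum]; exact Finset.sum_congr rfl fun i _ => by ring
        have E2 : ∑ j, (b * U.mulVec h j) * (a * U.mulVec g j)
            = a * b * ∑ j, U.mulVec h j * U.mulVec g j := by
          rw [Finset.mul_sum]; exact Finset.sum_congr rfl fun j _ => by ring
        have E3 : ∑ i, (b * h i) ^ 2 = b ^ 2 * a ^ 2 := by
          rw [ha2, Finset.mul_sum]; exact Finset.sum_congr rfl fun i _ => by ring
        have E4 : ∑ i, (a * g i) ^ 2 = a ^ 2 * b ^ 2 := by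
          rw [hb2, Finset.mul_sum]; exact Finset.sum_congr rfl fun i _ => by ring
        rw [E1, E2, E3, E4, ← mul_sub, abs_mul,
          abs_of_nonneg (mul_nonneg ha0 hb0)] at this
        have hab : 0 < a * b := mul_pos hap hbp
        have e5 : δ3s / 2 * (b ^ 2 * a ^ 2 + a ^ 2 * b ^ 2) = a * b * (δ3s * a * b) := by
          ring
        rw [e5] at this
        exact le_of_mul_le_mul_left this hab
  -- Step D : ℓ1 bound
  have hl1 : L1 - L0 ≤ Real.sqrt s * a := by
    set S : Finset (Fin d) := Finset.univ.filter (fun i => xstar i ≠ 0) with hSdef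
    have hL1S : L1 = ∑ i ∈ S, |xstar i| := by
      rw [hL1def]
      refine (Finset.sum_subset (Finset.subset_univ S) ?_).symm
      intro i _ hi
      rw [hSdef] at hi
      simp only [Finset.mem_filter, Finset.mem_univ, true_and, not_not] at hi
      simp [hi]
    have hL0S : ∑ i ∈ S, |xt1 i| ≤ L0 := by
      rw [hL0def]
      exact Finset.sum_le_sum_of_subset_of_nonneg (Finset.subset_univ S)
        (fun i _ _ => abs_nonneg _)
    have step1 : L1 - L0 ≤ ∑ i ∈ S, |h i| := by
      have : ∑ i ∈ S, |xstar i| - ∑ i ∈ S, |xt1 i| ≤ ∑ i ∈ S, |h i| := by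
        rw [← Finset.sum_sub_distrib]
        apply Finset.sum_le_sum
        intro i _
        calc |xstar i| - |xt1 i| ≤ |xstar i - xt1 i| := abs_sub_abs_le_abs_sub _ _
          _ = |h i| := by rw [hhi]; rw [abs_sub_comm]
      rw [hL1S]; linarith
    have cs : (∑ i ∈ S, |h i|) ^ 2 ≤ (S.card : ℝ) * ∑ i ∈ S, (h i) ^ 2 := by
      have := Finset.sum_mul_sq_le_sq_mul_sq S (fun _ => (1 : ℝ)) (fun i => |h i|)
      simp only [one_mul, one_pow, sq_abs] at this
      simpa [Finset.sum_const, nsmul_eq_mul] using this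
    have hsub : ∑ i ∈ S, (h i) ^ 2 ≤ ∑ i, (h i) ^ 2 :=
      Finset.sum_le_sum_of_subset_of_nonneg (Finset.subset_univ S)
        (fun i _ _ => sq_nonneg _)
    have hcard : (S.card : ℝ) ≤ (s : ℝ) := by exact_mod_cast hxstar
    have cs2 : (∑ i ∈ S, |h i|) ^ 2 ≤ (s : ℝ) * (∑ i, (h i) ^ 2) := by
      calc (∑ i ∈ S, |h i|) ^ 2 ≤ (S.card : ℝ) * ∑ i ∈ S, (h i) ^ 2 := cs
        _ ≤ (s : ℝ) * (∑ i, (h i) ^ 2) := by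
            apply mul_le_mul hcard hsub (by positivity) (by positivity)
    have hnn : 0 ≤ ∑ i ∈ S, |h i| := Finset.sum_nonneg fun i _ => abs_nonneg _
    have : ∑ i ∈ S, |h i| ≤ Real.sqrt s * a := by
      have h5 := Real.sqrt_le_sqrt cs2
      rw [Real.sqrt_sq hnn] at h5
      rw [Real.sqrt_mul (by positivity)] at h5
      rw [← hadef] at h5
      exact h5
    linarith
  -- Step E : combine
  have hsq : Real.sqrt s > 0 := Real.sqrt_pos.mpr (by exact_mod_cast hs)
  have hlamsq : lam * Real.sqrt s = (δs + Real.sqrt 2 * θ) * Δ := by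
    rw [hlam, div_mul_cancel₀]
    exact ne_of_gt hsq
  have main : a ^ 2 ≤ ((δs + Real.sqrt 2 * θ + δ3s) * Δ) * a := by
    have h6 : ∑ i, (h i) ^ 2 ≤ (∑ i, h i * g i) - (∑ j, U.mulVec h j * U.mulVec g j)
        + lam * (L1 - L0) := by
      rw [hip2] at hG; linarith
    have h7 : (∑ i, h i * g i) - (∑ j, U.mulVec h j * U.mulVec g j) ≤ δ3s * a * b :=
      le_trans (le_abs_self _) hCS
    have h8 : δ3s * a * b ≤ δ3s * a * Δ :=
      mul_le_mul_of_nonneg_left hbΔ (mul_nonneg hδ3s ha0)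
    have h9 : lam * (L1 - L0) ≤ lam * (Real.sqrt s * a) :=
      mul_le_mul_of_nonneg_left hl1 hlam0
    have h10 : lam * (Real.sqrt s * a) = (δs + Real.sqrt 2 * θ) * Δ * a := by
      rw [← mul_assoc, hlamsq]
    have e6 : ((δs + Real.sqrt 2 * θ + δ3s) * Δ) * a
        = (δs + Real.sqrt 2 * θ) * Δ * a + δ3s * a * Δ := by ring
    rw [ha2]
    linarith [h6, h7, h8, h9, h10, e6]
  have hK : 0 ≤ (δs + Real.sqrt 2 * θ + δ3s) * Δ := by
    apply mul_nonneg _ hΔ0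
    have : (0:ℝ) ≤ Real.sqrt 2 * θ := mul_nonneg (Real.sqrt_nonneg 2) hθ
    linarith
  rcases eq_or_lt_of_le ha0 with haz | hap
  · rw [← haz]; exact hK
  · rw [pow_two] at main
    exact le_of_mul_le_mul_right main hap
end

section
/- Discretization bound (Lemma 3 of the paper): let K = {w ∈ ℝ^d : ‖w‖₂ ≤ 1, ‖w‖₀ ≤ s}, let K(ε) ⊆ K be an ε-net of K (every point of K is within ℓ2-distance ε of K(ε)), and let F(w) = ⟨w, v⟩ for a fixed v ∈ ℝ^d. Define E = max_{w∈K} F(w) and E(ε) = max_{w∈K(ε)} F(w). Then for ε ∈ (0, 1/√2), E ≤ E(ε)/(1 − √2 ε). -/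
/-- Discretization bound (Lemma 3): for `K = {w : ‖w‖₂ ≤ 1, ‖w‖₀ ≤ s}`, an ε-net
`Kε ⊆ K`, and the linear functional `F w = ⟨w, v⟩`, the maxima `E` over `K` and
`Eε` over `Kε` satisfy `E ≤ Eε / (1 − √2 ε)` for `ε ∈ (0, 1/√2)`. -/
theorem stmt_18 {d s : ℕ} (v : Fin d → ℝ) (ε : ℝ)
    (hε0 : 0 < ε) (hε1 : ε < 1 / Real.sqrt 2)
    (K Kε : Set (Fin d → ℝ))
    (hK : K = {w | Real.sqrt (∑ i, (w i) ^ 2) ≤ 1 ∧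
        (Finset.univ.filter (fun i => w i ≠ 0)).card ≤ s})
    (hsub : Kε ⊆ K)
    (hnet : ∀ w ∈ K, ∃ w' ∈ Kε, Real.sqrt (∑ i, (w i - w' i) ^ 2) ≤ ε)
    (E Eε : ℝ)
    (hE : IsGreatest ((fun w => ∑ i, w i * v i) '' K) E)
    (hEε : IsGreatest ((fun w => ∑ i, w i * v i) '' Kε) Eε) :
    E ≤ Eε / (1 - Real.sqrt 2 * ε) := by
  have hs2 : (0:ℝ) < Real.sqrt 2 := Real.sqrt_pos.mpr (by norm_num)
  have hpos : 0 < 1 - Real.sqrt 2 * ε := by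
    have : Real.sqrt 2 * ε < Real.sqrt 2 * (1 / Real.sqrt 2) :=
      by exact mul_lt_mul_of_pos_left hε1 hs2
    rw [mul_one_div, div_self (ne_of_gt hs2)] at this
    linarith
  obtain ⟨w, hwK, hwE⟩ := hE.1
  obtain ⟨w', hw'Kε, hdist⟩ := hnet w hwK
  have hw'K := hsub hw'Kε
  -- E ≥ 0 since 0 ∈ K
  have h0K : (0 : Fin d → ℝ) ∈ K := by
    rw [hK]; constructor <;> simp
  have hE0 : (0:ℝ) ≤ E := hE.2 ⟨0, h0K, by simp⟩
  -- key lemma: a sparse vector z satisfies F z ≤ ‖z‖ * E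
  have key : ∀ z : Fin d → ℝ,
      (Finset.univ.filter (fun i => z i ≠ 0)).card ≤ s →
      ∑ i, z i * v i ≤ Real.sqrt (∑ i, z i ^ 2) * E := by
    intro z hz
    set n := Real.sqrt (∑ i, z i ^ 2) with hn
    have hSnn : (0:ℝ) ≤ ∑ i, z i ^ 2 :=
      Finset.sum_nonneg fun i _ => sq_nonneg _
    rcases eq_or_lt_of_le (Real.sqrt_nonneg (∑ i, z i ^ 2)) with h0 | h0
    · -- n = 0, so z = 0
      have hS0 : ∑ i, z i ^ 2 = 0 :=
        le_antisymm (Real.sqrt_eq_zero'.mp h0.symm) hSnn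
      have hz0 : ∀ i, z i = 0 := by
        intro i
        have := (Finset.sum_eq_zero_iff_of_nonneg
          (fun i _ => sq_nonneg (z i))).mp hS0 i (Finset.mem_univ i)
        exact pow_eq_zero_iff (by norm_num) |>.mp this
      simp only [hz0, zero_mul, Finset.sum_const_zero]
      exact mul_nonneg (Real.sqrt_nonneg _) hE0
    · have hnpos : 0 < n := h0
      have hmem : (fun i => z i / n) ∈ K := by
        rw [hK]
        constructor
        · have : ∑ i, (z i / n) ^ 2 = (∑ i, z i ^ 2) / n ^ 2 := by
            rw [Finset.sum_div]; exact Finset.sum_congr rfl fun i _ => by ring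
          rw [this]
          have hnsq : n ^ 2 = ∑ i, z i ^ 2 := Real.sq_sqrt hSnn
          rw [← hnsq]
          have : (n:ℝ)^2 / n^2 = 1 := div_self (by positivity)
          rw [this, Real.sqrt_one]
        · refine le_trans (Finset.card_le_card ?_) hz
          intro i hi
          simp only [Finset.mem_filter, Finset.mem_univ, true_and] at hi ⊢
          intro h; exact hi (by rw [h]; simp)
      have hle : ∑ i, (z i / n) * v i ≤ E := hE.2 ⟨_, hmem, rfl⟩
      have heq : ∑ i, z i * v i = n * ∑ i, (z i / n) * v i := by
        rw [Finset.mul_sum]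
        refine Finset.sum_congr rfl fun i _ => ?_
        have hne : n ≠ 0 := ne_of_gt hnpos
        field_simp
      rw [heq]
      exact mul_le_mul_of_nonneg_left hle (le_of_lt hnpos)
  -- split x = w - w' into y - y' with disjoint supports
  set y : Fin d → ℝ := fun i => if w i ≠ 0 then w i - w' i else 0 with hy
  set y' : Fin d → ℝ := fun i => if w i ≠ 0 then 0 else w' i - w i with hy'
  rw [hK] at hwK hw'K
  obtain ⟨hw1, hws⟩ := hwK
  obtain ⟨hw'1, hw's⟩ := hw'K
  have hys : (Finset.univ.filter (fun i => y i ≠ 0)).card ≤ s := by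
    refine le_trans (Finset.card_le_card ?_) hws
    intro i hi
    simp only [Finset.mem_filter, Finset.mem_univ, true_and, hy] at hi ⊢
    intro h; exact hi (by simp [h])
  have hy's : (Finset.univ.filter (fun i => (fun j => -(y' j)) i ≠ 0)).card ≤ s := by
    refine le_trans (Finset.card_le_card ?_) hw's
    intro i hi
    simp only [Finset.mem_filter, Finset.mem_univ, true_and, hy'] at hi ⊢
    intro h
    by_cases hw0 : w i ≠ 0
    · exact hi (by simp [hw0])
    · push_neg at hw0
      exact hi (by simp [hw0, h])
  have hsq : ∀ i, (w i - w' i) ^ 2 = y i ^ 2 + (-(y' i)) ^ 2 := by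
    intro i
    simp only [hy, hy']
    by_cases hw0 : w i = 0 <;> simp [hw0] <;> ring
  have hdecomp : ∀ i, w i = w' i + y i + (-(y' i)) := by
    intro i
    simp only [hy, hy']
    by_cases hw0 : w i = 0 <;> simp [hw0] <;> ring
  -- sums of squares
  set A := ∑ i, y i ^ 2 with hA
  set B := ∑ i, (-(y' i)) ^ 2 with hB
  have hAnn : (0:ℝ) ≤ A := Finset.sum_nonneg fun i _ => sq_nonneg _
  have hBnn : (0:ℝ) ≤ B := Finset.sum_nonneg fun i _ => sq_nonneg _
  have hAB : A + B = ∑ i, (w i - w' i) ^ 2 := by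
    rw [hA, hB, ← Finset.sum_add_distrib]
    exact Finset.sum_congr rfl fun i _ => (hsq i).symm
  have hABle : Real.sqrt (A + B) ≤ ε := by rw [hAB]; exact hdist
  -- √A + √B ≤ √2 * √(A+B)
  have hsqrt : Real.sqrt A + Real.sqrt B ≤ Real.sqrt 2 * Real.sqrt (A + B) := by
    rw [← Real.sqrt_mul (by norm_num : (0:ℝ) ≤ 2)]
    have h1 : (Real.sqrt A + Real.sqrt B) ^ 2 ≤ 2 * (A + B) := by
      have hA' : Real.sqrt A ^ 2 = A := Real.sq_sqrt hAnn
      have hB' : Real.sqrt B ^ 2 = B := Real.sq_sqrt hBnn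
      nlinarith [sq_nonneg (Real.sqrt A - Real.sqrt B), Real.sqrt_nonneg A,
        Real.sqrt_nonneg B]
    calc Real.sqrt A + Real.sqrt B
        = Real.sqrt ((Real.sqrt A + Real.sqrt B) ^ 2) := by
          rw [Real.sqrt_sq (by positivity)]
      _ ≤ Real.sqrt (2 * (A + B)) := Real.sqrt_le_sqrt h1
  -- bound F y and F (-y')
  have hFy : ∑ i, y i * v i ≤ Real.sqrt A * E := key y hys
  have hFy' : ∑ i, (-(y' i)) * v i ≤ Real.sqrt B * E := key (fun i => -(y' i)) hy's
  -- decompose F w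
  have hsplit : ∑ i, w i * v i =
      (∑ i, w' i * v i) + (∑ i, y i * v i) + (∑ i, (-(y' i)) * v i) := by
    rw [← Finset.sum_add_distrib, ← Finset.sum_add_distrib]
    exact Finset.sum_congr rfl fun i _ => by rw [hdecomp i]; ring
  have hw'le : ∑ i, w' i * v i ≤ Eε := hEε.2 ⟨w', hw'Kε, rfl⟩
  have hE' : E ≤ Eε + Real.sqrt 2 * ε * E := by
    have h2 : Real.sqrt A * E + Real.sqrt B * E ≤ Real.sqrt 2 * ε * E := by
      have := mul_le_mul_of_nonneg_right
        (le_trans hsqrt (mul_le_mul_of_nonneg_left hABle (le_of_lt hs2))) hE0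
      nlinarith
    calc E = ∑ i, w i * v i := hwE.symm
      _ = (∑ i, w' i * v i) + (∑ i, y i * v i) + (∑ i, (-(y' i)) * v i) := hsplit
      _ ≤ Eε + Real.sqrt A * E + Real.sqrt B * E := by
          gcongr
      _ ≤ Eε + Real.sqrt 2 * ε * E := by linarith
  rw [le_div_iff₀ hpos]
  nlinarith
end
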